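/- For all MiniJl types τ1 and τ2, reductive subtyping τ1 ≤r τ2 holds if and only if declarative subtyping τ1 ≤d τ2 holds (Theorem: Correctness of Reductive Subtyping). -/
import Mathlib


/-- MiniJl types -/
inductive Ty : Type
  | pair : Ty → Ty → Ty
  | union : Ty → Ty → Ty
  | int : Ty
  | flt : Ty
  | cmplx : Ty
  | str : Ty
  | real : Ty
  | num : Ty
deriving DecidableEq

/-- Value types: concrete nominal types and pairs of value types. -/
inductive ValTy : Ty → Prop
  | int : ValTy .int
  | flt : ValTy .flt
  | cmplx : ValTy .cmplx
  | str : ValTy .str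
  | pair {v1 v2 : Ty} : ValTy v1 → ValTy v2 → ValTy (.pair v1 v2)

/-- Matching relation `v ⋖ τ`. -/
inductive Matches : Ty → Ty → Prop
  | int : Matches .int .int
  | flt : Matches .flt .flt
  | cmplx : Matches .cmplx .cmplx
  | str : Matches .str .str
  | intReal : Matches .int .real
  | fltReal : Matches .flt .real
  | intNum : Matches .int .num
  | fltNum : Matches .flt .num
  | cmplxNum : Matches .cmplx .num
  | pair {v1 v2 t1 t2 : Ty} : Matches v1 t1 → Matches v2 t2 →
      Matches (.pair v1 v2) (.pair t1 t2)
  | unionL {v t1 t2 : Ty} : Matches v t1 → Matches v (.union t1 t2)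
  | unionR {v t1 t2 : Ty} : Matches v t2 → Matches v (.union t1 t2)

/-- Matching-based semantic subtyping. -/
def SemSub (t1 t2 : Ty) : Prop :=
  ∀ v : Ty, ValTy v → Matches v t1 → Matches v t2

/-- Tag interpretation of types as sets of value types. -/
def interp : Ty → Set Ty
  | .int => {.int}
  | .flt => {.flt}
  | .cmplx => {.cmplx}
  | .str => {.str}
  | .real => {.int, .flt}
  | .num => {.int, .flt, .cmplx}
  | .pair t1 t2 => {v | ∃ v1 ∈ interp t1, ∃ v2 ∈ interp t2, v = .pair v1 v2}
  | .union t1 t2 => interp t1 ∪ interp t2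

/-- Declarative subtyping. -/
inductive DeclSub : Ty → Ty → Prop
  | refl (t : Ty) : DeclSub t t
  | trans {t1 t2 t3 : Ty} : DeclSub t1 t2 → DeclSub t2 t3 → DeclSub t1 t3
  | intReal : DeclSub .int .real
  | fltReal : DeclSub .flt .real
  | realNum : DeclSub .real .num
  | cmplxNum : DeclSub .cmplx .num
  | realUnion : DeclSub .real (.union .int .flt)
  | numUnion : DeclSub .num (.union .real .cmplx)
  | pair {t1 t2 t1' t2' : Ty} : DeclSub t1 t1' → DeclSub t2 t2' →
      DeclSub (.pair t1 t2) (.pair t1' t2')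
  | unionL {t1 t2 t' : Ty} : DeclSub t1 t' → DeclSub t2 t' →
      DeclSub (.union t1 t2) t'
  | unionR1 (t1 t2 : Ty) : DeclSub t1 (.union t1 t2)
  | unionR2 (t1 t2 : Ty) : DeclSub t2 (.union t1 t2)
  | distr1 (t11 t12 t2 : Ty) :
      DeclSub (.pair (.union t11 t12) t2)
        (.union (.pair t11 t2) (.pair t12 t2))
  | distr2 (t1 t21 t22 : Ty) :
      DeclSub (.pair t1 (.union t21 t22))
        (.union (.pair t1 t21) (.pair t1 t22))

/-- Normal form predicate. -/
inductive InNF : Ty → Prop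
  | val {v : Ty} : ValTy v → InNF v
  | union {t1 t2 : Ty} : InNF t1 → InNF t2 → InNF (.union t1 t2)

/-- Union of pairs -/
def unprs : Ty → Ty → Ty
  | .union t11 t12, t2 => .union (unprs t11 t2) (unprs t12 t2)
  | t1, .union t21 t22 => .union (unprs t1 t21) (unprs t1 t22)
  | t1, t2 => .pair t1 t2

/-- Normalization function. -/
def NF : Ty → Ty
  | .int => .int
  | .flt => .flt
  | .cmplx => .cmplx
  | .str => .str
  | .real => .union .int .flt
  | .num => .union (.union .int .flt) .cmplx
  | .pair t1 t2 => unprs (NF t1) (NF t2)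
  | .union t1 t2 => .union (NF t1) (NF t2)

/-- Reductive subtyping. -/
inductive RedSub : Ty → Ty → Prop
  | intRefl : RedSub .int .int
  | fltRefl : RedSub .flt .flt
  | cmplxRefl : RedSub .cmplx .cmplx
  | strRefl : RedSub .str .str
  | intReal : RedSub .int .real
  | fltReal : RedSub .flt .real
  | cmplxNum : RedSub .cmplx .num
  | intNum : RedSub .int .num
  | fltNum : RedSub .flt .num
  | pair {t1 t2 t1' t2' : Ty} : RedSub t1 t1' → RedSub t2 t2' →
      RedSub (.pair t1 t2) (.pair t1' t2')
  | unionL {t1 t2 t' : Ty} : RedSub t1 t' → RedSub t2 t' →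
      RedSub (.union t1 t2) t'
  | unionR1 {t t1' t2' : Ty} : RedSub t t1' → RedSub t (.union t1' t2')
  | unionR2 {t t1' t2' : Ty} : RedSub t t2' → RedSub t (.union t1' t2')
  | nf {t t' : Ty} : RedSub (NF t) t' → RedSub t t'

lemma unprs_union2 {t1 t21 t22 : Ty} (h : ∀ t11 t12, t1 ≠ Ty.union t11 t12) :
    unprs t1 (.union t21 t22) = .union (unprs t1 t21) (unprs t1 t22) := by
  cases t1 <;> simp [unprs] at h ⊢

lemma unprs_base {t1 t2 : Ty} (h1 : ∀ t11 t12, t1 ≠ Ty.union t11 t12)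
    (h2 : ∀ t21 t22, t2 ≠ Ty.union t21 t22) : unprs t1 t2 = .pair t1 t2 := by
  cases t1 <;> cases t2 <;> simp [unprs] at h1 h2 ⊢

lemma declSub_unprs (a b : Ty) :
    DeclSub (.pair a b) (unprs a b) ∧ DeclSub (unprs a b) (.pair a b) := by
  induction a, b using unprs.induct with
  | case1 t11 t12 t2 ih1 ih2 =>
    simp only [unprs]
    exact ⟨.trans (.distr1 _ _ _)
        (.unionL (.trans ih1.1 (.unionR1 _ _)) (.trans ih2.1 (.unionR2 _ _))),
      .unionL (.trans ih1.2 (.pair (.unionR1 _ _) (.refl _)))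
        (.trans ih2.2 (.pair (.unionR2 _ _) (.refl _)))⟩
  | case2 t1 t21 t22 h ih1 ih2 =>
    rw [unprs_union2 (fun a b hh => h a b hh)]
    exact ⟨.trans (.distr2 _ _ _)
        (.unionL (.trans ih1.1 (.unionR1 _ _)) (.trans ih2.1 (.unionR2 _ _))),
      .unionL (.trans ih1.2 (.pair (.refl _) (.unionR1 _ _)))
        (.trans ih2.2 (.pair (.refl _) (.unionR2 _ _)))⟩
  | case3 t1 t2 h1 h2 =>
    rw [unprs_base (fun a b hh => h1 a b hh) (fun a b hh => h2 a b hh)]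
    exact ⟨.refl _, .refl _⟩

lemma declSub_NF (t : Ty) : DeclSub t (NF t) ∧ DeclSub (NF t) t := by
  induction t with
  | pair t1 t2 ih1 ih2 =>
    exact ⟨.trans (.pair ih1.1 ih2.1) (declSub_unprs _ _).1,
      .trans (declSub_unprs _ _).2 (.pair ih1.2 ih2.2)⟩
  | union t1 t2 ih1 ih2 =>
    exact ⟨.unionL (.trans ih1.1 (.unionR1 _ _)) (.trans ih2.1 (.unionR2 _ _)),
      .unionL (.trans ih1.2 (.unionR1 _ _)) (.trans ih2.2 (.unionR2 _ _))⟩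
  | int => exact ⟨.refl _, .refl _⟩
  | flt => exact ⟨.refl _, .refl _⟩
  | cmplx => exact ⟨.refl _, .refl _⟩
  | str => exact ⟨.refl _, .refl _⟩
  | real => exact ⟨.realUnion, .unionL .intReal .fltReal⟩
  | num =>
    exact ⟨.trans .numUnion
        (.unionL (.trans .realUnion (.unionR1 _ _)) (.unionR2 _ _)),
      .unionL (.unionL (.trans .intReal .realNum) (.trans .fltReal .realNum)) .cmplxNum⟩

lemma redSub_declSub {t1 t2 : Ty} (h : RedSub t1 t2) : DeclSub t1 t2 := by
  induction h with
  | intRefl => exact .refl _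
  | fltRefl => exact .refl _
  | cmplxRefl => exact .refl _
  | strRefl => exact .refl _
  | intReal => exact .intReal
  | fltReal => exact .fltReal
  | cmplxNum => exact .cmplxNum
  | intNum => exact .trans .intReal .realNum
  | fltNum => exact .trans .fltReal .realNum
  | pair _ _ ih1 ih2 => exact .pair ih1 ih2
  | unionL _ _ ih1 ih2 => exact .unionL ih1 ih2
  | unionR1 _ ih => exact .trans ih (.unionR1 _ _)
  | unionR2 _ ih => exact .trans ih (.unionR2 _ _)
  | nf _ ih => exact .trans (declSub_NF _).1 ih

lemma declSub_matches {t1 t2 : Ty} (h : DeclSub t1 t2) :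
    ∀ v, Matches v t1 → Matches v t2 := by
  induction h with
  | refl => exact fun _ m => m
  | trans _ _ ih1 ih2 => exact fun v m => ih2 v (ih1 v m)
  | intReal => intro v m; cases m; exact .intReal
  | fltReal => intro v m; cases m; exact .fltReal
  | realNum => intro v m; cases m; exacts [.intNum, .fltNum]
  | cmplxNum => intro v m; cases m; exact .cmplxNum
  | realUnion => intro v m; cases m; exacts [.unionL .int, .unionR .flt]
  | numUnion => intro v m; cases m;
                exacts [.unionL .intReal, .unionL .fltReal, .unionR .cmplx]
  | pair _ _ ih1 ih2 =>
    intro v m; cases m with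
    | pair m1 m2 => exact .pair (ih1 _ m1) (ih2 _ m2)
  | unionL _ _ ih1 ih2 =>
    intro v m; cases m with
    | unionL m => exact ih1 _ m
    | unionR m => exact ih2 _ m
  | unionR1 => exact fun v m => .unionL m
  | unionR2 => exact fun v m => .unionR m
  | distr1 =>
    intro v m; cases m with
    | pair m1 m2 =>
      cases m1 with
      | unionL m1 => exact .unionL (.pair m1 m2)
      | unionR m1 => exact .unionR (.pair m1 m2)
  | distr2 =>
    intro v m; cases m with
    | pair m1 m2 =>
      cases m2 with
      | unionL m2 => exact .unionL (.pair m1 m2)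
      | unionR m2 => exact .unionR (.pair m1 m2)

lemma valTy_matches_self {v : Ty} (h : ValTy v) : Matches v v := by
  induction h with
  | int => exact .int
  | flt => exact .flt
  | cmplx => exact .cmplx
  | str => exact .str
  | pair _ _ ih1 ih2 => exact .pair ih1 ih2

lemma matches_redSub {v t : Ty} (hv : ValTy v) (h : Matches v t) : RedSub v t := by
  induction h with
  | int => exact .intRefl
  | flt => exact .fltRefl
  | cmplx => exact .cmplxRefl
  | str => exact .strRefl
  | intReal => exact .intReal
  | fltReal => exact .fltReal
  | intNum => exact .intNum
  | fltNum => exact .fltNum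
  | cmplxNum => exact .cmplxNum
  | pair _ _ ih1 ih2 =>
    cases hv with
    | pair h1 h2 => exact .pair (ih1 h1) (ih2 h2)
  | unionL _ ih => exact .unionR1 (ih hv)
  | unionR _ ih => exact .unionR2 (ih hv)

lemma inNF_unprs {a b : Ty} (ha : InNF a) (hb : InNF b) : InNF (unprs a b) := by
  induction a, b using unprs.induct with
  | case1 t11 t12 t2 ih1 ih2 =>
    simp only [unprs]
    cases ha with
    | val hv => cases hv
    | union h1 h2 => exact .union (ih1 h1 hb) (ih2 h2 hb)
  | case2 t1 t21 t22 h ih1 ih2 =>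
    rw [unprs_union2 (fun a b hh => h a b hh)]
    cases hb with
    | val hv => cases hv
    | union h1 h2 => exact .union (ih1 ha h1) (ih2 ha h2)
  | case3 t1 t2 h1 h2 =>
    rw [unprs_base (fun a b hh => h1 a b hh) (fun a b hh => h2 a b hh)]
    cases ha with
    | val hva =>
      cases hb with
      | val hvb => exact .val (.pair hva hvb)
      | union => exact absurd rfl (h2 _ _)
    | union => exact absurd rfl (h1 _ _)

lemma inNF_NF (t : Ty) : InNF (NF t) := by
  induction t with
  | pair _ _ ih1 ih2 => exact inNF_unprs ih1 ih2
  | union _ _ ih1 ih2 => exact .union ih1 ih2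
  | int => exact .val .int
  | flt => exact .val .flt
  | cmplx => exact .val .cmplx
  | str => exact .val .str
  | real => exact .union (.val .int) (.val .flt)
  | num => exact .union (.union (.val .int) (.val .flt)) (.val .cmplx)

lemma semSub_redSub_of_inNF {t1 t2 : Ty} (h : InNF t1) (hs : SemSub t1 t2) :
    RedSub t1 t2 := by
  induction h with
  | @val v hv => exact matches_redSub hv (hs v hv (valTy_matches_self hv))
  | union _ _ ih1 ih2 =>
    exact .unionL (ih1 fun v hv m => hs v hv (.unionL m))
      (ih2 fun v hv m => hs v hv (.unionR m))

theorem redSub_iff_declSub (t1 t2 : Ty) : RedSub t1 t2 ↔ DeclSub t1 t2 := by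
  constructor
  · exact redSub_declSub
  · intro h
    exact .nf (semSub_redSub_of_inNF (inNF_NF t1)
      (fun v hv m => declSub_matches h v (declSub_matches (declSub_NF t1).2 v m)))
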